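/- arXiv:2011.08015 — 3 statements merged into one kernel-verified Lean document; each statement's English description precedes it below -/
import Mathlib

section
/- Let Td(n; d_1,…,d_r) be the Todd genus of the complete intersection X_n(d_1,…,d_r), given by Td(n; d) = Σ_{j=0}^{r} (-1)^{n+r+j} Σ_{1 ≤ k_1 < ⋯ < k_j ≤ r} C(-1 + d_{k_1} + ⋯ + d_{k_j}, n+r). If c_1 := n + r + 1 - Σ_{i=1}^{r} d_i < 0 and all d_i > 1, then (-1)^n · Td(n; d_1,…,d_r) ≥ n + r. -/
open Finset

/-- Generalized binomial coefficient `C(a, k) = a(a-1)⋯(a-k+1)/k!`. -/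
def gbc (a : ℚ) (k : ℕ) : ℚ :=
  (∏ i ∈ Finset.range k, (a - i)) / (Nat.factorial k)


/-- Todd genus of the complete intersection `X_n(d₁,…,d_r)` via the combinatorial formula. -/
def Td (n r : ℕ) (d : Fin r → ℤ) : ℚ :=
  ∑ S ∈ (Finset.univ : Finset (Fin r)).powerset,
    (-1) ^ (n + r + S.card) * gbc (-1 + ∑ i ∈ S, (d i : ℚ)) (n + r)

/-!
Write `E` for the shift `f ↦ f(· + 1)` and `F_k = Ring.choose · k`. Up to the sign `(-1)^n`, the
Todd genus is `(∏ᵢ (E^{dᵢ} - 1)) F_{n+r}` evaluated at `-1`. Factoring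
`E^d - 1 = (1 + E + ⋯ + E^{d-1})(E - 1)` and using Pascal's rule `(E - 1) F_{k+1} = F_k` gives
`(-1)^n Td = ∑ C(|b| - 1, n)` over the box `0 ≤ bᵢ < dᵢ`. Every term is nonnegative except
`C(-1, n) = (-1)^n ≥ -1` at `b = 0`, the top corner contributes `C(M - 1, n) ≥ n + 1` and its
`r` neighbours `C(M - 2, n) ≥ 1` each, where `M = ∑ (dᵢ - 1) ≥ n + 2` because `c₁ < 0`.
-/

open Polynomial

theorem gbc_eq_ringChoose (a : ℚ) (k : ℕ) : gbc a k = Ring.choose a k := by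
  rw [Ring.choose_eq_smul, ← aeval_eq_smeval, aeval_def, eval₂_eq_eval_map, descPochhammer_map,
    descPochhammer_eval_eq_prod_range, gbc, smul_eq_mul, div_eq_inv_mul]

theorem ringChoose_neg_one (n : ℕ) : Ring.choose (-1 : ℚ) n = (-1) ^ n := by
  rw [Ring.choose_neg, add_sub_cancel_left, Ring.choose_natCast, Nat.choose_self, Nat.cast_one,
    Units.smul_def, zsmul_one, Int.coe_negOnePow_natCast, Int.cast_pow, Int.cast_neg, Int.cast_one]

theorem ringChoose_neg_one_add_natCast_succ (t n : ℕ) :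
    Ring.choose (-1 + ((t + 1 : ℕ) : ℚ)) n = t.choose n := by
  rw [Nat.cast_succ, neg_add_cancel_comm_assoc, Ring.choose_natCast]

noncomputable def shift : Module.End ℚ (ℚ → ℚ) := LinearMap.funLeft ℚ ℚ (· + 1)

theorem shift_pow_apply (k : ℕ) (f : ℚ → ℚ) (x : ℚ) : (shift ^ k) f x = f (x + k) := by
  induction k generalizing f with
  | zero => simp
  | succ k ih =>
    rw [pow_succ, Module.End.mul_apply, ih]
    simp [shift, LinearMap.funLeft_apply, add_assoc]

theorem shift_sub_one_pow_choose (n c : ℕ) :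
    ((shift - 1) ^ c) (fun y => Ring.choose y (n + c)) = fun y => Ring.choose y n := by
  induction c with
  | zero => simp
  | succ c ih =>
    rw [pow_succ, Module.End.mul_apply, ← ih]
    congr 1
    funext y
    simp [shift, LinearMap.funLeft_apply, ← add_assoc, Ring.choose_succ_succ]

section Box

variable {ι : Type*} [Fintype ι] [DecidableEq ι]

theorem prod_X_pow_sub_one_eq_sum_powerset {R : Type*} [CommRing R] (m : ι → ℕ) :
    ∏ i, (X ^ m i - 1 : R[X]) =
      ∑ S ∈ univ.powerset, (-1 : R) ^ (Fintype.card ι + #S) • X ^ ∑ i ∈ S, m i := by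
  simp_rw [sub_eq_add_neg, prod_add, prod_pow_eq_pow_sum, prod_const]
  refine sum_congr rfl fun S _ => ?_
  rw [← compl_eq_univ_sdiff, ← card_compl_add_card S, add_assoc, ← two_mul, pow_add, pow_mul,
    neg_one_sq, one_pow, mul_one, smul_eq_C_mul, mul_comm, map_pow, map_neg, map_one]

theorem prod_X_pow_sub_one_eq_sum_piFinset {R : Type*} [CommRing R] (m : ι → ℕ) :
    ∏ i, (X ^ m i - 1 : R[X]) =
      (∑ b ∈ Fintype.piFinset fun i => range (m i), X ^ ∑ i, b i) *
        (X - 1) ^ Fintype.card ι := by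
  simp_rw [← geom_sum_mul, prod_mul_distrib, prod_const, prod_univ_sum, prod_pow_eq_pow_sum]
  rfl

theorem sum_powerset_choose_eq_sum_piFinset (m : ι → ℕ) (x : ℚ) (n : ℕ) :
    ∑ S ∈ univ.powerset, (-1) ^ (Fintype.card ι + #S) *
        Ring.choose (x + ∑ i ∈ S, (m i : ℚ)) (n + Fintype.card ι) =
      ∑ b ∈ Fintype.piFinset fun i => range (m i), Ring.choose (x + ∑ i, (b i : ℚ)) n := by
  have h := congrArg
    (fun p : ℚ[X] => aeval shift p (fun y => Ring.choose y (n + Fintype.card ι)) x)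
    ((prod_X_pow_sub_one_eq_sum_powerset m).symm.trans (prod_X_pow_sub_one_eq_sum_piFinset m))
  simpa [shift_pow_apply, Module.End.mul_apply, shift_sub_one_pow_choose] using h

theorem sum_update_pred_add_one (f : ι → ℕ) {i : ι} (hi : f i ≠ 0) :
    ∑ k, Function.update f i (f i - 1) k + 1 = ∑ k, f k := by
  rw [sum_update_of_mem (mem_univ i), sum_eq_add_sum_sdiff_singleton_of_mem (mem_univ i) f]
  omega

omit [Fintype ι] in
theorem injective_update_pred (f : ι → ℕ) (hf : ∀ i, f i ≠ 0) :
    Function.Injective fun i => Function.update f i (f i - 1) := by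
  intro i j hij
  by_contra hne
  have := congrFun hij i
  simp only [Function.update_self, Function.update_of_ne hne] at this
  have := hf i
  omega

theorem add_add_card_nsmul_le_sum_piFinset {α : Type*} [AddCommMonoid α] [PartialOrder α]
    [IsOrderedAddMonoid α] (m : ι → ℕ) (hm : ∀ i, 2 ≤ m i) (hM : 2 ≤ ∑ i, (m i - 1))
    (g : ℕ → α) (hg : ∀ t, 1 ≤ t → 0 ≤ g t) :
    g 0 + g (∑ i, (m i - 1)) + Fintype.card ι • g (∑ i, (m i - 1) - 1) ≤
      ∑ b ∈ Fintype.piFinset fun i => range (m i), g (∑ i, b i) := by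
  set c : ι → ℕ := fun i => m i - 1
  have hM' : 2 ≤ ∑ k, c k := hM
  have hc (i : ι) : c i ≠ 0 := by have := hm i; simp only [c]; omega
  set below : ι → ι → ℕ := fun i => Function.update c i (c i - 1)
  have sum_below (i : ι) : ∑ k, below i k = ∑ k, c k - 1 :=
    Nat.eq_sub_of_add_eq (sum_update_pred_add_one c (hc i))
  have hsub : insert 0 (insert c (univ.image below)) ⊆ Fintype.piFinset fun i => range (m i) := by
    have mem_of_le (b : ι → ℕ) (hb : b ≤ c) : b ∈ Fintype.piFinset fun i => range (m i) :=
      Fintype.mem_piFinset.2 fun i => mem_range.2 <| (hb i).trans_lt <| by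
        have := hm i
        simp only [c]
        omega
    simp only [insert_subset_iff, image_subset_iff, mem_univ, forall_const]
    exact ⟨mem_of_le 0 fun i => Nat.zero_le (c i), mem_of_le c le_rfl,
      fun i => mem_of_le _ (update_le_self_iff.2 (Nat.sub_le _ _))⟩
  have h0 : (0 : ι → ℕ) ∉ insert c (univ.image below) := by
    simp only [mem_insert, mem_image, mem_univ, true_and, not_or, not_exists]
    refine ⟨fun h => ?_, fun i h => ?_⟩ <;>
    · have := congrArg (fun b : ι → ℕ => ∑ k, b k) h
      simp only [Pi.zero_apply, sum_const_zero, sum_below] at this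
      omega
  have hc_notMem : c ∉ univ.image below := by
    simp only [mem_image, mem_univ, true_and, not_exists]
    intro i h
    have := congrArg (fun b : ι → ℕ => ∑ k, b k) h
    simp only [sum_below] at this
    omega
  calc g 0 + g (∑ i, (m i - 1)) + Fintype.card ι • g (∑ i, (m i - 1) - 1)
      = ∑ b ∈ insert 0 (insert c (univ.image below)), g (∑ i, b i) := by
        rw [sum_insert h0, sum_insert hc_notMem,
          sum_image fun i _ j _ h => injective_update_pred c hc h,
          sum_congr rfl fun i _ => congrArg g (sum_below i)]
        simp only [sum_const, card_univ, Pi.zero_apply, smul_zero, add_assoc]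
        rfl
    _ ≤ ∑ b ∈ Fintype.piFinset fun i => range (m i), g (∑ i, b i) := by
        refine sum_le_sum_of_subset_of_nonneg hsub fun b _ hb => hg _ ?_
        by_contra! hsum
        exact hb (mem_insert.mpr (Or.inl (funext fun i =>
          (sum_eq_zero_iff.mp (Nat.lt_one_iff.mp hsum)) i (mem_univ i))))

theorem natCast_add_card_le_sum_piFinset_choose (m : ι → ℕ) (n : ℕ) (hm : ∀ i, 2 ≤ m i)
    (hM : n + 2 ≤ ∑ i, (m i - 1)) :
    (n : ℚ) + Fintype.card ι ≤
      ∑ b ∈ Fintype.piFinset fun i => range (m i), Ring.choose (-1 + ∑ i, (b i : ℚ)) n := by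
  obtain ⟨s, hs, hMs⟩ : ∃ s, n + 1 ≤ s ∧ ∑ i, (m i - 1) = s + 1 :=
    ⟨∑ i, (m i - 1) - 1, by omega, by omega⟩
  have key := add_add_card_nsmul_le_sum_piFinset m hm (by omega)
    (fun t => Ring.choose (-1 + (t : ℚ)) n) fun t ht => by
      obtain ⟨t, rfl⟩ := Nat.exists_eq_add_of_le' ht
      rw [ringChoose_neg_one_add_natCast_succ]
      positivity
  rw [hMs, Nat.add_sub_cancel, nsmul_eq_mul] at key
  simp only [Nat.cast_sum] at key
  have h_zero : -1 ≤ Ring.choose (-1 + ((0 : ℕ) : ℚ)) n := by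
    rw [Nat.cast_zero, add_zero, ringChoose_neg_one]
    simpa using neg_abs_le ((-1 : ℚ) ^ n)
  have h_top : (n : ℚ) + 1 ≤ Ring.choose (-1 + ((s + 1 : ℕ) : ℚ)) n := by
    have h := Nat.choose_le_choose n hs
    rw [Nat.choose_succ_self_right] at h
    rw [ringChoose_neg_one_add_natCast_succ]
    exact_mod_cast h
  have h_below : 1 ≤ Ring.choose (-1 + (s : ℚ)) n := by
    obtain ⟨t, rfl⟩ := Nat.exists_eq_add_of_le' (show 1 ≤ s by omega)
    rw [ringChoose_neg_one_add_natCast_succ]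
    exact_mod_cast Nat.choose_pos (by omega)
  have := mul_le_mul_of_nonneg_left h_below (Nat.cast_nonneg (α := ℚ) (Fintype.card ι))
  linarith

end Box

theorem neg_one_pow_mul_Td_eq_sum_piFinset (n r : ℕ) (d : Fin r → ℕ) :
    (-1) ^ n * Td n r (fun i => d i) =
      ∑ b ∈ Fintype.piFinset fun i => range (d i), Ring.choose (-1 + ∑ i, (b i : ℚ)) n := by
  rw [← sum_powerset_choose_eq_sum_piFinset, Td, mul_sum, Fintype.card_fin]
  refine sum_congr rfl fun S _ => ?_
  rw [← mul_assoc, ← pow_add, gbc_eq_ringChoose,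
    show n + (n + r + #S) = 2 * n + (r + #S) by ring, pow_add, pow_mul, neg_one_sq, one_pow,
    one_mul]
  simp only [Int.cast_natCast]

theorem todd_neg_c1_general (n r : ℕ) (d : Fin r → ℤ) (hd : ∀ i, 1 < d i)
    (hc : (n : ℤ) + r + 1 - ∑ i, d i < 0) :
    (n : ℚ) + r ≤ (-1) ^ n * Td n r d := by
  lift d to Fin r → ℕ using fun i => by have := hd i; omega
  dsimp only at hd hc
  have hd₂ (i : Fin r) : 2 ≤ d i := by have := hd i; omega
  have hM : n + 2 ≤ ∑ i, (d i - 1) := by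
    rw [sum_tsub_distrib univ fun i _ => one_le_two.trans (hd₂ i), sum_const, card_univ,
      Fintype.card_fin, smul_eq_mul, mul_one]
    rw [← Nat.cast_sum] at hc
    omega
  rw [neg_one_pow_mul_Td_eq_sum_piFinset]
  simpa using natCast_add_card_le_sum_piFinset_choose d n hd₂ hM

theorem todd_neg_c1 (n r : ℕ) (hr : 1 ≤ r) (d : Fin r → ℤ) (hd : ∀ i, 1 < d i)
    (hc : (n : ℤ) + r + 1 - ∑ i, d i < 0) :
    (n : ℚ) + r ≤ (-1) ^ n * Td n r d :=
  todd_neg_c1_general n r d hd hc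
end

section
/- Let Td(n; d_1,…,d_r) := Σ_{j=0}^{r} (-1)^{n+r+j} Σ_{1 ≤ k_1 < ⋯ < k_j ≤ r} C(-1 + d_{k_1} + ⋯ + d_{k_j}, n+r), with r ≥ 2 and d_1,…,d_r > 1. Suppose that for each j with 1 ≤ j ≤ r, one has n + r - Σ_{i=1}^{r} d_i + d_j ≥ 0, and that c_1 := n + r + 1 - Σ_{i=1}^{r} d_i < 0. Then Td(n; d_1,…,d_r) = 1 + (-1)^n C(-1 + d_1 + ⋯ + d_r, n + r), and consequently (-1)^n Td(n; d_1,…,d_r) ≥ n + r. -/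
open Finset

/-!
A proper nonempty subfamily `S` of the degrees omits some `dⱼ`, so the hypotheses give
`0 ≤ -1 + ∑_{i ∈ S} dᵢ < n + r`, and its generalized binomial coefficient is an ordinary binomial
coefficient that vanishes. Only `S = ∅`, contributing `(-1)^{n+r} C(-1, n+r) = 1`, and the full
family survive. Since `c₁ < 0`, the top term is `C(m, n + r)` with `m ≥ n + r + 1`, hence at least
`n + r + 1`, which gives the bound.
-/

open Nat

lemma gbc_natCast (m k : ℕ) : gbc m k = m.choose k := by
  rw [Nat.cast_choose_eq_descPochhammer_div, descPochhammer_eval_eq_prod_range, gbc]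

lemma gbc_intCast {a : ℤ} (ha : 0 ≤ a) (k : ℕ) : gbc a k = a.toNat.choose k := by
  lift a to ℕ using ha
  simpa using gbc_natCast a k

lemma gbc_neg_one (k : ℕ) : gbc (-1) k = (-1) ^ k := by
  have hprod : ∏ i ∈ range k, ((-1 : ℚ) - i) = (-1) ^ k * k ! :=
    calc ∏ i ∈ range k, ((-1 : ℚ) - i) = ∏ i ∈ range k, (-1) * ((i + 1 : ℕ) : ℚ) :=
          prod_congr rfl fun i _ => by push_cast; ring
      _ = (-1) ^ k * k ! := by
          rw [prod_mul_distrib, prod_const, card_range, ← cast_prod,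
            prod_range_add_one_eq_factorial]
  rw [gbc, hprod, mul_div_assoc, div_self (by positivity), mul_one]

lemma Td_eq_of_forall_gbc_eq_zero {n r : ℕ} [NeZero r] {d : Fin r → ℤ}
    (h : ∀ S : Finset (Fin r), S.Nonempty → S ≠ univ →
      gbc (-1 + ∑ i ∈ S, (d i : ℚ)) (n + r) = 0) :
    Td n r d = 1 + (-1) ^ n * gbc (-1 + ∑ i, (d i : ℚ)) (n + r) := by
  have hne : (∅ : Finset (Fin r)) ≠ univ := univ_nonempty.ne_empty.symm
  rw [Td, powerset_univ, ← sum_subset (subset_univ {∅, univ}), sum_pair hne]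
  · congr 1
    · rw [card_empty, sum_empty, add_zero, add_zero, gbc_neg_one, ← mul_pow, neg_one_mul,
        neg_neg, one_pow]
    · rw [Finset.card_fin, add_assoc, pow_add, ← two_mul, pow_mul, neg_one_sq,
        one_pow, mul_one]
  · intro S _ hS
    rw [mem_insert, mem_singleton, not_or] at hS
    rw [h S (nonempty_iff_ne_empty.2 hS.1) hS.2, mul_zero]

lemma gbc_sum_eq_zero_of_ne_univ {n r : ℕ} {d : Fin r → ℤ} (hd : ∀ i, 0 < d i)
    (hj : ∀ j, 0 ≤ (n : ℤ) + r - ∑ i, d i + d j) {S : Finset (Fin r)} (hS : S.Nonempty)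
    (hSu : S ≠ univ) : gbc (-1 + ∑ i ∈ S, (d i : ℚ)) (n + r) = 0 := by
  obtain ⟨j, hjS⟩ := not_forall.1 (mt eq_univ_of_forall hSu)
  obtain ⟨i, hiS⟩ := hS
  have hlow : d i ≤ ∑ k ∈ S, d k := single_le_sum (fun k _ => (hd k).le) hiS
  have hhigh : ∑ k ∈ S, d k ≤ ∑ k, d k - d j := by
    rw [← sum_erase_eq_sub (mem_univ j)]
    exact sum_le_sum_of_subset_of_nonneg (fun k hk => mem_erase.2 ⟨ne_of_mem_of_not_mem hk hjS,
      mem_univ k⟩) fun k _ _ => (hd k).le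
  have hcast : -1 + ∑ k ∈ S, (d k : ℚ) = ((∑ k ∈ S, d k - 1 : ℤ) : ℚ) := by push_cast; ring
  have hlt : (∑ k ∈ S, d k - 1).toNat < n + r := by
    have := hj j
    have := hd i
    omega
  rw [hcast, gbc_intCast (by linarith [hd i]), Nat.choose_eq_zero_of_lt hlt, Nat.cast_zero]

lemma succ_le_choose_of_lt {m k : ℕ} (h : k < m) : k + 1 ≤ m.choose k :=
  calc k + 1 = (k + 1).choose k := (choose_succ_self_right k).symm
    _ ≤ m.choose k := choose_le_choose k h

theorem todd_neg_c1_collapse (n r : ℕ) (hr : 2 ≤ r) (d : Fin r → ℤ) (hd : ∀ i, 1 < d i)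
    (hj : ∀ j, 0 ≤ (n : ℤ) + r - ∑ i, d i + d j)
    (hc : (n : ℤ) + r + 1 - ∑ i, d i < 0) :
    Td n r d = 1 + (-1) ^ n * gbc (-1 + ∑ i, (d i : ℚ)) (n + r) ∧
      (n : ℚ) + r ≤ (-1) ^ n * Td n r d := by
  have : NeZero r := ⟨by omega⟩
  have hTd : Td n r d = 1 + (-1) ^ n * gbc (-1 + ∑ i, (d i : ℚ)) (n + r) :=
    Td_eq_of_forall_gbc_eq_zero fun S hS hSu =>
      gbc_sum_eq_zero_of_ne_univ (fun i => by linarith [hd i]) hj hS hSu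
  refine ⟨hTd, ?_⟩
  have hcast : -1 + ∑ i, (d i : ℚ) = ((∑ i, d i - 1 : ℤ) : ℚ) := by push_cast; ring
  have hbound : ((n + r + 1 : ℕ) : ℚ) ≤ gbc (-1 + ∑ i, (d i : ℚ)) (n + r) := by
    rw [hcast, gbc_intCast (by omega)]
    exact cast_le.2 (succ_le_choose_of_lt (by omega))
  have hsign : (-1 : ℚ) ^ n * (-1) ^ n = 1 := by rw [← mul_pow, neg_one_mul, neg_neg, one_pow]
  rw [hTd, mul_add, mul_one, ← mul_assoc, hsign, one_mul]
  push_cast at hbound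
  linarith [neg_abs_le ((-1 : ℚ) ^ n), abs_neg_one_pow (α := ℚ) n]
end

section
/- Define A_k(n; d_1,…,d_r) := k^n · Σ_{j=0}^{r} (-1)^{r-j} Σ_{1 ≤ k_1 < ⋯ < k_j ≤ r} C(c_1/k - 1 + d_{k_1} + ⋯ + d_{k_j}, n+r) with c_1 = n + r + 1 - Σ d_i, k ≥ 2, k | c_1, and all d_i > 1. If c_1 > 0 then A_k(n; d) = 0; if c_1 = 0 then A_k(n; d) = k^n(1 + (-1)^n). -/
/-!
When `k ∣ c₁`, say `c₁ = k q`, every argument `q - 1 + ∑_{i ∈ S} dᵢ` of the binomial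
coefficients is an integer, and `gbc` agrees with `Ring.choose`, so everything reduces to
`choose a m` for integers `a`, which vanishes for `0 ≤ a < m`. If `c₁ > 0` and `k ≥ 2` then
`1 ≤ q < c₁`, which puts all arguments into `[0, n + r)`. If `c₁ = 0` then `q = 0` and only the
extreme subsets survive: `S = ∅` gives `(-1)ʳ choose (-1) (n + r) = (-1)ⁿ` and `S = univ`
gives `choose (n + r) (n + r) = 1`.
-/

open Finset

/-- The `A_k`-genus of the complete intersection `X_n(d₁,…,d_r)` via the combinatorial
formula, where `c₁ = n + r + 1 - ∑ dᵢ`. -/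
def Ak (n r k : ℕ) (d : Fin r → ℤ) : ℚ :=
  (k : ℚ) ^ n * ∑ S ∈ (Finset.univ : Finset (Fin r)).powerset,
    (-1) ^ (r - S.card) *
      gbc (((n : ℚ) + r + 1 - ∑ i, (d i : ℚ)) / k - 1 + ∑ i ∈ S, (d i : ℚ)) (n + r)

theorem gbc_eq_choose (a : ℚ) (m : ℕ) : gbc a m = Ring.choose a m := by
  rw [Ring.choose_eq_smul, ← Polynomial.aeval_eq_smeval, Polynomial.aeval_def,
    ← Polynomial.eval_map, descPochhammer_map, descPochhammer_eval_eq_prod_range, gbc,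
    smul_eq_mul, div_eq_inv_mul]

theorem gbc_intCast_s18 (a : ℤ) (m : ℕ) : gbc a m = (Ring.choose a m : ℤ) := by
  rw [gbc_eq_choose, ← eq_intCast (Int.castRingHom ℚ), ← eq_intCast (Int.castRingHom ℚ),
    Ring.map_choose]

theorem Int.choose_eq_zero_of_lt {a : ℤ} {m : ℕ} (h0 : 0 ≤ a) (h : a < m) :
    Ring.choose a m = 0 := by
  lift a to ℕ using h0
  rw [Ring.choose_natCast, Nat.choose_eq_zero_of_lt (by exact_mod_cast h), Nat.cast_zero]

theorem Int.choose_neg_one (m : ℕ) : Ring.choose (-1 : ℤ) m = (-1) ^ m := by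
  rw [Ring.choose_neg, add_sub_cancel_left, Ring.choose_natCast, Nat.choose_self]
  simp [Int.negOnePow_def, Units.smul_def]

def alternatingChooseSum {r : ℕ} (m : ℕ) (d : Fin r → ℤ) (a : ℤ) : ℤ :=
  ∑ S ∈ (univ : Finset (Fin r)).powerset, (-1) ^ (r - #S) * Ring.choose (a + ∑ i ∈ S, d i) m

section alternatingChooseSum

variable {r : ℕ} {m : ℕ} {d : Fin r → ℤ}

theorem alternatingChooseSum_eq_zero {a : ℤ} (ha : 0 ≤ a) (hd : ∀ i, 0 ≤ d i)
    (hlt : a + ∑ i, d i < m) : alternatingChooseSum m d a = 0 := by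
  refine sum_eq_zero fun S _ => ?_
  have hS : ∑ i ∈ S, d i ≤ ∑ i, d i := sum_le_univ_sum_of_nonneg hd
  rw [Int.choose_eq_zero_of_lt (by linarith [sum_nonneg fun i (_ : i ∈ S) => hd i]) (by omega),
    mul_zero]

theorem alternatingChooseSum_neg_one (hd : ∀ i, 0 < d i) (hsum : ∑ i, d i = m + 1) :
    alternatingChooseSum m d (-1) = 1 + (-1) ^ (r + m) := by
  have huniv : (univ : Finset (Fin r)) ≠ ∅ := by
    rintro h
    simp [h] at hsum
    omega
  rw [alternatingChooseSum, sum_eq_add univ ∅ huniv]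
  · rw [card_univ, Fintype.card_fin, Nat.sub_self, hsum, show (-1 : ℤ) + (m + 1) = m by ring,
      Ring.choose_natCast, Nat.choose_self, card_empty, Nat.sub_zero, sum_empty, add_zero,
      Int.choose_neg_one, ← pow_add]
    simp
  · rintro S - ⟨hSu, hSe⟩
    obtain ⟨x, hx⟩ := nonempty_iff_ne_empty.mpr hSe
    obtain ⟨y, hy⟩ : ∃ y, y ∉ S := by simpa [eq_univ_iff_forall] using hSu
    have hlb : d x ≤ ∑ i ∈ S, d i := single_le_sum (fun i _ => (hd i).le) hx
    have hub : ∑ i ∈ S, d i < ∑ i, d i :=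
      sum_lt_sum_of_subset (subset_univ S) (mem_univ y) hy (hd y) fun i _ _ => (hd i).le
    rw [Int.choose_eq_zero_of_lt (by linarith [hd x]) (by omega), mul_zero]
  · simp
  · simp

end alternatingChooseSum

theorem Ak_eq_alternatingChooseSum {n r k : ℕ} {d : Fin r → ℤ} {q : ℤ} (hk : k ≠ 0)
    (hq : (n : ℤ) + r + 1 - ∑ i, d i = k * q) :
    Ak n r k d = k ^ n * alternatingChooseSum (n + r) d (q - 1) := by
  have hq' : (n : ℚ) + r + 1 - ∑ i, (d i : ℚ) = k * q := by exact_mod_cast hq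
  have hk' : (k : ℚ) ≠ 0 := Nat.cast_ne_zero.mpr hk
  simp only [Ak, alternatingChooseSum, hq', mul_div_cancel_left₀ _ hk']
  push_cast [← gbc_intCast_s18]
  rfl

theorem Ak_values_general (n r k : ℕ) (hk : 2 ≤ k) (d : Fin r → ℤ)
    (hd : ∀ i, 1 < d i) (hdvd : (k : ℤ) ∣ ((n : ℤ) + r + 1 - ∑ i, d i)) :
    (0 < (n : ℤ) + r + 1 - ∑ i, d i → Ak n r k d = 0) ∧
      ((n : ℤ) + r + 1 - ∑ i, d i = 0 → Ak n r k d = (k : ℚ) ^ n * (1 + (-1) ^ n)) := by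
  obtain ⟨q, hq⟩ := hdvd
  rw [Ak_eq_alternatingChooseSum (by omega) hq]
  refine ⟨fun hc => ?_, fun hc => ?_⟩
  · have hq1 : 1 ≤ q := by nlinarith
    rw [alternatingChooseSum_eq_zero (by omega) (fun i => by linarith [hd i])
      (by push_cast; nlinarith), Int.cast_zero, mul_zero]
  · have hq0 : q = 0 := (mul_eq_zero.mp (hq.symm.trans hc)).resolve_left (by omega)
    rw [hq0, zero_sub, alternatingChooseSum_neg_one (fun i => by linarith [hd i]) (by omega),
      show r + (n + r) = n + 2 * r by ring, pow_add, pow_mul]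
    norm_num

theorem Ak_values (n r k : ℕ) (hr : 1 ≤ r) (hk : 2 ≤ k) (d : Fin r → ℤ)
    (hd : ∀ i, 1 < d i) (hdvd : (k : ℤ) ∣ ((n : ℤ) + r + 1 - ∑ i, d i)) :
    (0 < (n : ℤ) + r + 1 - ∑ i, d i → Ak n r k d = 0) ∧
      ((n : ℤ) + r + 1 - ∑ i, d i = 0 → Ak n r k d = (k : ℚ) ^ n * (1 + (-1) ^ n)) :=
  Ak_values_general n r k hk d hd hdvd
end
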